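/- Fix u ∈ {1,…,n−1} and let β* ∈ ℝ^{(n−1)×p} be a matrix whose rows are all zero except possibly row u. Then for every i ∈ {1,…,n−1}, the i-th row of X̄ᵀX̄β* equals d_i · d_u · ( min(i,u)·(n − max(i,u)) / n ) · β*_{u,·}; that is, it equals d_i d_u (i(n−u)/n) β*_{u,·} for i ≤ u and d_i d_u (u(n−i)/n) β*_{u,·} for i > u. -/

import Mathlib

open Matrix BigOperators

/-!
Centering subtracts column means, so the Gram matrix of `X̄` is `XᵀX` minus the rank-one
correction `s sᵀ / n` built from the column sums `s`. With 1-based indices `a, b`, column `a` of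
`X` has `n - a` entries equal to `d_a`, and columns `a, b` share `n - max a b` nonzero rows, so
the `(a, b)` Gram entry is `d_a d_b ((n - max a b) - (n - a)(n - b)/n)`, which equals
`d_a d_b min a b (n - max a b)/n`. Since `β*` has a single nonzero row `u`, row `i` of
`X̄ᵀX̄β*` is that Gram entry times `β*_u`.
-/

/-- The `n × (n-1)` design matrix with `X i j = d j` for `i > j` (1-based). -/
noncomputable def designX (n : ℕ) (d : Fin (n-1) → ℝ) : Matrix (Fin n) (Fin (n-1)) ℝ :=
  fun i j => if (j : ℕ) < (i : ℕ) then d j else 0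

/-- Column-centering of a matrix: subtract from each entry the mean of its column. -/
noncomputable def centerCols {n m : ℕ} (M : Matrix (Fin n) (Fin m) ℝ) :
    Matrix (Fin n) (Fin m) ℝ :=
  fun i j => M i j - (∑ k : Fin n, M k j) / n

/-- The column-centered design matrix `X̄`. -/
noncomputable def Xbar (n : ℕ) (d : Fin (n-1) → ℝ) : Matrix (Fin n) (Fin (n-1)) ℝ :=
  centerCols (designX n d)

open Finset

lemma Fin.card_filter_lt_val {n j : ℕ} (hj : j < n) : #{k : Fin n | j < k} = n - (j + 1) := by
  have h := card_filter_add_card_filter_not (s := (univ : Finset (Fin n)))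
    (fun k => j < (k : ℕ))
  simp only [not_lt, ← Nat.lt_succ_iff, card_univ, Fintype.card_fin] at h
  rw [Fin.card_filter_val_lt] at h
  omega

lemma sum_ite_lt_val {R : Type*} [Ring R] {n j : ℕ} (hj : j < n) (c : R) :
    ∑ k : Fin n, (if j < (k : ℕ) then c else 0) = ((n : R) - (j + 1)) * c := by
  rw [sum_ite, sum_const_zero, add_zero, sum_const, nsmul_eq_mul, Fin.card_filter_lt_val hj,
    Nat.cast_sub hj, Nat.cast_add_one]

lemma centerCols_transpose_mul_self_apply {n m : ℕ} (M : Matrix (Fin n) (Fin m) ℝ)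
    (i j : Fin m) :
    ((centerCols M)ᵀ * centerCols M) i j =
      (Mᵀ * M) i j - (∑ k, M k i) * (∑ k, M k j) / n := by
  rcases Nat.eq_zero_or_pos n with rfl | hn
  · simp [Matrix.mul_apply]
  simp only [Matrix.mul_apply, Matrix.transpose_apply, centerCols, sub_mul, mul_sub,
    sum_sub_distrib, ← sum_mul, ← mul_sum, sum_const, card_univ, Fintype.card_fin, nsmul_eq_mul]
  field_simp
  ring

lemma sum_designX_apply {n : ℕ} (d : Fin (n - 1) → ℝ) (j : Fin (n - 1)) :
    ∑ k, designX n d k j = ((n : ℝ) - (j + 1)) * d j :=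
  sum_ite_lt_val (by omega) (d j)

lemma designX_transpose_mul_self_apply {n : ℕ} (d : Fin (n - 1) → ℝ) (i j : Fin (n - 1)) :
    ((designX n d)ᵀ * designX n d) i j =
      ((n : ℝ) - max ((i : ℝ) + 1) ((j : ℝ) + 1)) * (d i * d j) := by
  simp only [Matrix.mul_apply, Matrix.transpose_apply, designX, ite_zero_mul_ite_zero,
    ← max_lt_iff]
  rw [sum_ite_lt_val (by omega), max_add_add_right, ← Nat.cast_max]

lemma sub_sub_mul_sub_div (n a b : ℝ) (hn : n ≠ 0) :
    (n - max a b) - (n - a) * (n - b) / n = min a b * (n - max a b) / n := by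
  rcases le_total a b with h | h
  · rw [max_eq_right h, min_eq_left h]; field_simp; ring
  · rw [max_eq_left h, min_eq_right h]; field_simp; ring

lemma Xbar_transpose_mul_self_apply {n : ℕ} (d : Fin (n - 1) → ℝ) (i j : Fin (n - 1)) :
    ((Xbar n d)ᵀ * Xbar n d) i j =
      d i * d j * (((min ((i : ℕ) + 1) ((j : ℕ) + 1) : ℕ) : ℝ)
        * ((n : ℝ) - ((max ((i : ℕ) + 1) ((j : ℕ) + 1) : ℕ) : ℝ)) / n) := by
  have hn : (n : ℝ) ≠ 0 := Nat.cast_ne_zero.mpr (by have := i.isLt; omega)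
  rw [Xbar, centerCols_transpose_mul_self_apply, designX_transpose_mul_self_apply,
    sum_designX_apply, sum_designX_apply]
  push_cast
  rw [← sub_sub_mul_sub_div _ _ _ hn]
  ring

theorem statement8_general (n : ℕ) (d : Fin (n-1) → ℝ)
    (p : ℕ) (u : Fin (n-1)) (βstar : Matrix (Fin (n-1)) (Fin p) ℝ)
    (hβ : ∀ i, i ≠ u → ∀ k, βstar i k = 0) :
    ∀ (i : Fin (n-1)) (k : Fin p),
      ((Xbar n d)ᵀ * Xbar n d * βstar) i k =
        d i * d u * (((min ((i : ℕ) + 1) ((u : ℕ) + 1) : ℕ) : ℝ)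
          * ((n : ℝ) - ((max ((i : ℕ) + 1) ((u : ℕ) + 1) : ℕ) : ℝ)) / n) * βstar u k := by
  intro i k
  rw [Matrix.mul_apply, sum_eq_single u (fun j _ hj => by rw [hβ j hj k, mul_zero]) (by simp),
    Xbar_transpose_mul_self_apply]

/-- If `β*` has all rows zero except possibly row `u`, then the `i`-th row
of `X̄ᵀX̄β*` equals `dᵢ d_u (min(i,u)(n − max(i,u))/n) β*_{u,·}` (1-based indices
`i ↦ (i:ℕ)+1`, `u ↦ (u:ℕ)+1`). -/
theorem statement8 (n : ℕ) (hn : 2 ≤ n) (d : Fin (n-1) → ℝ) (hd : ∀ j, 0 < d j)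
    (p : ℕ) (u : Fin (n-1)) (βstar : Matrix (Fin (n-1)) (Fin p) ℝ)
    (hβ : ∀ i, i ≠ u → ∀ k, βstar i k = 0) :
    ∀ (i : Fin (n-1)) (k : Fin p),
      ((Xbar n d)ᵀ * Xbar n d * βstar) i k =
        d i * d u * (((min ((i : ℕ) + 1) ((u : ℕ) + 1) : ℕ) : ℝ)
          * ((n : ℝ) - ((max ((i : ℕ) + 1) ((u : ℕ) + 1) : ℕ) : ℝ)) / n) * βstar u k :=
  statement8_general n d p u βstar hβ
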